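/- arXiv:1201.4533 — 4 statements merged into one kernel-verified Lean document; each statement's English description precedes it below -/
import Mathlib

section
/- Let f ∈ F₂₅[x,y,z] be a homogeneous polynomial of degree 6. Suppose there exist a matrix M ∈ GL₃(F₂₅) and c ∈ F₂₅ˣ with M·M̄ = Id₃ and c³ = 1 such that f∘M⁻¹ = c·f̄ (where bar denotes applying the Frobenius x ↦ x⁵ to entries/coefficients). Then there exist T ∈ GL₃(F₂₅) and λ ∈ F₂₅ˣ such that λ²·(f∘T⁻¹) has all coefficients in F₅. -/
open MvPolynomial

noncomputable section

instance : Fact (Nat.Prime 5) := ⟨by norm_num⟩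

/-- The field with 25 elements. -/
abbrev F25 : Type := GaloisField 5 2

/-- The Frobenius automorphism `x ↦ x⁵` of `F₂₅` over `F₅`, as a ring homomorphism. -/
def frob25 : F25 →+* F25 := frobenius F25 5

/-- The transform `f ↦ f∘T⁻¹ = f((x,y,z)T⁻¹)` of a polynomial in three variables
by an invertible matrix `T`. -/
def polyTransform (T : Matrix (Fin 3) (Fin 3) F25) (f : MvPolynomial (Fin 3) F25) :
    MvPolynomial (Fin 3) F25 :=
  aeval (fun j => ∑ i, C (T⁻¹ i j) * X i) f

lemma frob_frob (x : F25) : frob25 (frob25 x) = x := by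
  haveI : Fintype F25 := Fintype.ofFinite _
  have hc : Fintype.card F25 = 25 := by
    have := GaloisField.card 5 2 (by norm_num)
    simpa [Nat.card_eq_fintype_card] using this
  have := FiniteField.pow_card x
  rw [hc] at this
  simp only [frob25, frobenius_def]
  rw [← pow_mul]
  exact this

lemma fixed_mem {a : F25} (h : frob25 a = a) : a ∈ Set.range (algebraMap (ZMod 5) F25) := by
  classical
  have ha : a ^ 5 = a := by simpa [frob25, frobenius_def] using h
  by_contra hno
  set p : Polynomial F25 := Polynomial.X ^ 5 - Polynomial.X with hp
  have hpne : p ≠ 0 := FiniteField.X_pow_card_sub_X_ne_zero F25 (by norm_num)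
  have hdeg : p.natDegree = 5 := FiniteField.X_pow_card_sub_X_natDegree_eq F25 (by norm_num)
  set S : Finset F25 := Finset.univ.image (algebraMap (ZMod 5) F25) with hS
  have hcardS : S.card = 5 := by
    rw [hS, Finset.card_image_of_injective _ (algebraMap (ZMod 5) F25).injective]
    simp
  have hroot : ∀ x ∈ insert a S, x ∈ p.roots.toFinset := by
    intro x hx
    rw [Multiset.mem_toFinset, Polynomial.mem_roots hpne]
    rcases Finset.mem_insert.1 hx with rfl | hxS
    · simp [hp, Polynomial.IsRoot, ha]
    · obtain ⟨y, -, rfl⟩ := Finset.mem_image.1 hxS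
      have : (y : ZMod 5) ^ 5 = y := ZMod.pow_card y
      simp [hp, Polynomial.IsRoot, ← map_pow, this]
  have h6 : (insert a S).card = 6 := by
    rw [Finset.card_insert_of_notMem (by
      intro hmem
      exact hno (by
        obtain ⟨y, -, rfl⟩ := Finset.mem_image.1 hmem
        exact ⟨y, rfl⟩)), hcardS]
  have hle : (insert a S).card ≤ p.roots.toFinset.card :=
    Finset.card_le_card (fun x hx => hroot x hx)
  have : p.roots.toFinset.card ≤ 5 := by
    calc p.roots.toFinset.card ≤ Multiset.card p.roots := Multiset.toFinset_card_le _
    _ ≤ p.natDegree := Polynomial.card_roots' p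
    _ = 5 := hdeg
  omega

lemma exists_not_fixed : ∃ ω : F25, frob25 ω ≠ ω := by
  classical
  by_contra hno
  push_neg at hno
  haveI : Fintype F25 := Fintype.ofFinite _
  have hc : Fintype.card F25 = 25 := by
    have := GaloisField.card 5 2 (by norm_num)
    simpa [Nat.card_eq_fintype_card] using this
  have hsub : (Finset.univ : Finset F25) ⊆ Finset.univ.image (algebraMap (ZMod 5) F25) := by
    intro x _
    obtain ⟨y, rfl⟩ := fixed_mem (hno x)
    exact Finset.mem_image.2 ⟨y, Finset.mem_univ _, rfl⟩
  have hcardle := Finset.card_le_card hsub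
  rw [Finset.card_univ, hc] at hcardle
  have h5 : (Finset.univ.image (algebraMap (ZMod 5) F25)).card ≤ 5 := by
    calc _ ≤ (Finset.univ : Finset (ZMod 5)).card := Finset.card_image_le
    _ = 5 := by simp
  omega

/-- Substitution by an arbitrary matrix (not its inverse). -/
def subM (N : Matrix (Fin 3) (Fin 3) F25) (f : MvPolynomial (Fin 3) F25) :
    MvPolynomial (Fin 3) F25 :=
  aeval (fun j => ∑ i, C (N i j) * X i) f

lemma polyTransform_eq (T : Matrix (Fin 3) (Fin 3) F25) (f : MvPolynomial (Fin 3) F25) :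
    polyTransform T f = subM T⁻¹ f := rfl

lemma subM_comp (P Q : Matrix (Fin 3) (Fin 3) F25) (f : MvPolynomial (Fin 3) F25) :
    subM P (subM Q f) = subM (P * Q) f := by
  unfold subM
  rw [comp_aeval_apply]
  have hfun : (fun i => aeval (fun j => ∑ i, C (P i j) * X i)
      (∑ i1, C (Q i1 i) * X i1))
      = fun j => ∑ i, (C ((P * Q) i j) * X i : MvPolynomial (Fin 3) F25) := by
    funext j
    rw [map_sum]
    simp only [map_mul, aeval_C, aeval_X, algebraMap_eq, Finset.mul_sum]
    rw [Finset.sum_comm]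
    refine Finset.sum_congr rfl fun k _ => ?_
    rw [Matrix.mul_apply, map_sum, Finset.sum_mul]
    refine Finset.sum_congr rfl fun i _ => ?_
    rw [map_mul]
    ring
  rw [hfun]

lemma subM_smul (N : Matrix (Fin 3) (Fin 3) F25) (a : F25) (f : MvPolynomial (Fin 3) F25) :
    subM N (a • f) = a • subM N f := by
  unfold subM; exact map_smul (aeval _).toLinearMap a f

lemma subM_map (N : Matrix (Fin 3) (Fin 3) F25) (f : MvPolynomial (Fin 3) F25) :
    (subM N f).map frob25 = subM (N.map frob25) (f.map frob25) := by
  unfold subM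
  rw [aeval_def, aeval_def, algebraMap_eq, map_eval₂]
  congr 1
  funext j
  simp [Matrix.map_apply]

lemma descent (Mm : Matrix (Fin 3) (Fin 3) F25) (hM : Mm * Mm.map frob25 = 1) :
    ∃ T : Matrix (Fin 3) (Fin 3) F25, IsUnit T ∧ Mm * T.map frob25 = T := by
  classical
  set φ : (Fin 3 → F25) → (Fin 3 → F25) := fun v => Mm.mulVec (fun i => frob25 (v i)) with hφ
  have hφφ : ∀ v, φ (φ v) = v := by
    intro v
    show Mm.mulVec (fun i => frob25 (Mm.mulVec (fun i => frob25 (v i)) i)) = v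
    have h : (fun i => frob25 (Mm.mulVec (fun i => frob25 (v i)) i))
        = (Mm.map frob25).mulVec v := by
      funext i
      simp [Matrix.mulVec, dotProduct, map_sum, map_mul, frob_frob, Matrix.map_apply]
    rw [h, Matrix.mulVec_mulVec, hM, Matrix.one_mulVec]
  have hadd : ∀ a b, φ (a + b) = φ a + φ b := by
    intro a b
    show Mm.mulVec _ = _
    have h : (fun i => frob25 ((a + b) i))
        = (fun i => frob25 (a i)) + (fun i => frob25 (b i)) := by
      funext i; simp
    rw [h, Matrix.mulVec_add]
  have hsmul : ∀ (t : F25) a, φ (t • a) = frob25 t • φ a := by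
    intro t a
    show Mm.mulVec _ = _
    have h : (fun i => frob25 ((t • a) i)) = frob25 t • (fun i => frob25 (a i)) := by
      funext i; simp [smul_eq_mul]
    rw [h, Matrix.mulVec_smul]
  set V : Set (Fin 3 → F25) := {v | φ v = v} with hV
  have hspan : Submodule.span F25 V = ⊤ := by
    rw [eq_top_iff]
    rintro v -
    obtain ⟨ω, hω⟩ := exists_not_fixed
    have h1 : v + φ v ∈ V := by
      show φ (v + φ v) = v + φ v
      rw [hadd, hφφ, add_comm]
    have h2 : ω • v + frob25 ω • φ v ∈ V := by
      show φ (ω • v + frob25 ω • φ v) = ω • v + frob25 ω • φ v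
      rw [hadd, hsmul, hsmul, hφφ, frob_frob, add_comm]
    have hne : frob25 ω - ω ≠ 0 := sub_ne_zero.2 hω
    have hcomb : frob25 ω • (v + φ v) - (ω • v + frob25 ω • φ v) = (frob25 ω - ω) • v := by
      rw [smul_add, sub_smul]; abel
    have hv : v = (frob25 ω - ω)⁻¹ • (frob25 ω • (v + φ v) - (ω • v + frob25 ω • φ v)) := by
      rw [hcomb, smul_smul, inv_mul_cancel₀ hne, one_smul]
    rw [hv]
    exact Submodule.smul_mem _ _ (Submodule.sub_mem _
      (Submodule.smul_mem _ _ (Submodule.subset_span h1)) (Submodule.subset_span h2))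
  obtain ⟨b, hbV, hbsp, hbli⟩ := exists_linearIndependent F25 V
  have hbtop : ⊤ ≤ Submodule.span F25 (Set.range ((↑) : b → (Fin 3 → F25))) := by
    rw [Subtype.range_coe, hbsp, hspan]
  let B := Module.Basis.mk hbli hbtop
  haveI : Fintype b := FiniteDimensional.fintypeBasisIndex B
  have hcard : Fintype.card b = 3 := by
    rw [← Module.finrank_eq_card_basis B, Module.finrank_fin_fun]
  let e : b ≃ Fin 3 := Fintype.equivFinOfCardEq hcard
  let E := B.reindex e
  have hEV : ∀ j, E j ∈ V := by
    intro j
    have h : E j = B (e.symm j) := B.reindex_apply e j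
    rw [h]
    have h2 : B (e.symm j) = ((e.symm j : b) : Fin 3 → F25) := Module.Basis.mk_apply _ _ _
    rw [h2]
    exact hbV (e.symm j).2
  let Tm : Matrix (Fin 3) (Fin 3) F25 := Matrix.of fun i j => E j i
  have hTM : (Pi.basisFun F25 (Fin 3)).toMatrix ⇑E = Tm := by
    ext i j
    simp [Module.Basis.toMatrix_apply, Tm]
  have hU : IsUnit Tm := by
    rw [← hTM]
    haveI := (Pi.basisFun F25 (Fin 3)).invertibleToMatrix E
    exact isUnit_of_invertible _
  refine ⟨Tm, hU, ?_⟩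
  ext i j
  have hEj : φ (E j) = E j := hEV j
  have h : (Mm * Tm.map frob25) i j = φ (E j) i := by
    simp [Matrix.mul_apply, Matrix.mulVec, dotProduct, hφ, Matrix.map_apply, Tm]
  rw [h, hEj]
  rfl

theorem stmt_0 (f : MvPolynomial (Fin 3) F25) (hf : f.IsHomogeneous 6)
    (M : GL (Fin 3) F25) (c : F25ˣ)
    (hM : (M : Matrix (Fin 3) (Fin 3) F25) *
      (M : Matrix (Fin 3) (Fin 3) F25).map frob25 = 1)
    (hc : c ^ 3 = 1)
    (hfM : polyTransform (M : Matrix (Fin 3) (Fin 3) F25) f =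
      (c : F25) • f.map frob25) :
    ∃ (T : GL (Fin 3) F25) (lam : F25ˣ),
      ∀ m, (((lam : F25) ^ 2 • polyTransform (T : Matrix (Fin 3) (Fin 3) F25) f).coeff m)
        ∈ Set.range (algebraMap (ZMod 5) F25) := by
  classical
  set Mm : Matrix (Fin 3) (Fin 3) F25 := (M : Matrix (Fin 3) (Fin 3) F25) with hMm
  obtain ⟨Tm, hTu, hT⟩ := descent Mm hM
  have hTdet : IsUnit Tm.det := (Matrix.isUnit_iff_isUnit_det Tm).1 hTu
  have hTinv : Tm⁻¹ * Tm = 1 := Matrix.nonsing_inv_mul Tm hTdet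
  have hinvmap : (Tm.map frob25)⁻¹ = Tm⁻¹.map frob25 := by
    apply Matrix.inv_eq_left_inv
    rw [← Matrix.map_mul, hTinv]
    exact Matrix.map_one _ (map_zero frob25) (map_one frob25)
  -- f.map frob25 in terms of f
  have hfm : f.map frob25 = ((c⁻¹ : F25ˣ) : F25) • polyTransform Mm f := by
    rw [hfM, smul_smul, Units.inv_mul, one_smul]
  -- the key equation
  have key : (polyTransform Tm f).map frob25
      = ((c⁻¹ : F25ˣ) : F25) • polyTransform Tm f := by
    rw [polyTransform_eq, subM_map, ← hinvmap, ← polyTransform_eq, hfm,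
      polyTransform_eq, polyTransform_eq, subM_smul, subM_comp,
      ← Matrix.mul_inv_rev, ← polyTransform_eq, hT]
    rfl
  refine ⟨hTu.unit, c ^ 2, fun m => ?_⟩
  have hcoe : ((hTu.unit : GL (Fin 3) F25) : Matrix (Fin 3) (Fin 3) F25) = Tm := hTu.unit_spec
  rw [hcoe]
  set u : F25 := (polyTransform Tm f).coeff m with hu
  have hfrozu : frob25 u = ((c⁻¹ : F25ˣ) : F25) * u := by
    have := congrArg (fun g => MvPolynomial.coeff m g) key
    simpa [MvPolynomial.coeff_map, MvPolynomial.coeff_smul] using this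
  have hcoeff : ((( (c : F25) ^ 2) ^ 2 • polyTransform Tm f).coeff m)
      = (c : F25) ^ 4 * u := by
    rw [MvPolynomial.coeff_smul, ← hu, smul_eq_mul, ← pow_mul]
  have hc15 : (c : F25) ^ 15 = 1 := by
    have h3 : (c : F25) ^ 3 = 1 := by
      have := congrArg Units.val hc
      push_cast at this
      exact this
    calc (c : F25) ^ 15 = ((c : F25) ^ 3) ^ 5 := by ring
    _ = 1 := by rw [h3]; norm_num
  have hfix : frob25 ((c : F25) ^ 4 * u) = (c : F25) ^ 4 * u := by
    have hfc : frob25 ((c : F25)) = (c : F25) ^ 5 := by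
      simp [frob25, frobenius_def]
    rw [map_mul, map_pow, hfc, hfrozu]
    have hcinv : ((c⁻¹ : F25ˣ) : F25) = ((c : F25) ^ 15) * ((c⁻¹ : F25ˣ) : F25) := by
      rw [hc15, one_mul]
    calc ((c : F25) ^ 5) ^ 4 * (((c⁻¹ : F25ˣ) : F25) * u)
        = (c : F25) ^ 19 * (((c : F25) * ((c⁻¹ : F25ˣ) : F25)) * u) := by ring
      _ = (c : F25) ^ 19 * u := by
          rw [show ((c : F25) * ((c⁻¹ : F25ˣ) : F25)) = 1 by exact_mod_cast Units.mul_inv c,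
            one_mul]
      _ = (c : F25) ^ 15 * ((c : F25) ^ 4 * u) := by ring
      _ = (c : F25) ^ 4 * u := by rw [hc15, one_mul]
  have := fixed_mem hfix
  simpa [hcoeff, Units.val_pow_eq_pow_val] using this

end
end

section
/- Let B_F ⊂ P² be the Fermat sextic x⁶+y⁶+z⁶=0 in characteristic 5, and let l be a line tangent to B_F at a point [a:b:c] that is not F₂₅-rational. Then the intersection multiplicity of l and B_F at [a:b:c] is 5, and l meets B_F transversely at exactly one other point, namely [a²⁵ : b²⁵ : c²⁵]. -/
noncomputable section

/-- An algebraic closure of `F₅` (the ambient field for points of `P²`). -/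
abbrev Kbar : Type := AlgebraicClosure (ZMod 5)

/-- Fifth powers are injective in characteristic 5. -/
lemma pow5_inj (x y : Kbar) (h : x ^ 5 = y ^ 5) : x = y := by
  have h0 : (x - y) ^ 5 = 0 := by
    rw [sub_pow_char (p := 5) x y, h, sub_self]
  have := pow_eq_zero_iff (n := 5) (by norm_num) |>.mp h0
  exact sub_eq_zero.mp this

/-- If two vectors `p, q` both have vanishing cross product with a nonzero
vector `w`, then `p` and `q` are proportional (all 2×2 minors vanish). -/
lemma cross_helper (p1 p2 p3 q1 q2 q3 w1 w2 w3 : Kbar)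
    (hw : ¬(w1 = 0 ∧ w2 = 0 ∧ w3 = 0))
    (hp1 : p2 * w3 = p3 * w2) (hp2 : p3 * w1 = p1 * w3) (hp3 : p1 * w2 = p2 * w1)
    (hq1 : q2 * w3 = q3 * w2) (hq2 : q3 * w1 = q1 * w3) (hq3 : q1 * w2 = q2 * w1) :
    p1 * q2 = q1 * p2 ∧ p1 * q3 = q1 * p3 ∧ p2 * q3 = q2 * p3 := by
  have hw' : w1 ≠ 0 ∨ w2 ≠ 0 ∨ w3 ≠ 0 := by tauto
  rcases hw' with h | h | h
  · have g1 : p1 * q2 = q1 * p2 :=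
      mul_right_cancel₀ h (by linear_combination q1 * hp3 - p1 * hq3)
    have g2 : p1 * q3 = q1 * p3 :=
      mul_right_cancel₀ h (by linear_combination p1 * hq2 - q1 * hp2)
    have g3 : p2 * q3 = q2 * p3 :=
      mul_right_cancel₀ h (by linear_combination p2 * hq2 - q2 * hp2 - w3 * g1)
    exact ⟨g1, g2, g3⟩
  · have g1 : p1 * q2 = q1 * p2 :=
      mul_right_cancel₀ h (by linear_combination q2 * hp3 - p2 * hq3)
    have g3 : p2 * q3 = q2 * p3 :=
      mul_right_cancel₀ h (by linear_combination q2 * hp1 - p2 * hq1)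
    have g2 : p1 * q3 = q1 * p3 :=
      mul_right_cancel₀ h (by linear_combination q1 * hp1 - p1 * hq1 + w3 * g1)
    exact ⟨g1, g2, g3⟩
  · have g2 : p1 * q3 = q1 * p3 :=
      mul_right_cancel₀ h (by linear_combination p3 * hq2 - q3 * hp2)
    have g3 : p2 * q3 = q2 * p3 :=
      mul_right_cancel₀ h (by linear_combination q3 * hp1 - p3 * hq1)
    have g1 : p1 * q2 = q1 * p2 :=
      mul_right_cancel₀ h (by linear_combination p1 * hq1 - q1 * hp1 + w2 * g2)
    exact ⟨g1, g2, g3⟩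

/-- If all 2×2 minors of `(a,b,c)` and `(a',b',c')` vanish and `(a,b,c) ≠ 0`,
then `(a',b',c')` is a scalar multiple of `(a,b,c)`. -/
lemma get_s (a b c a' b' c' : Kbar) (h0 : ¬(a = 0 ∧ b = 0 ∧ c = 0))
    (m3 : a * b' = a' * b) (m2 : a * c' = a' * c) (m1 : b * c' = b' * c) :
    ∃ s : Kbar, a' = s * a ∧ b' = s * b ∧ c' = s * c := by
  by_cases ha : a = 0
  · by_cases hb : b = 0
    · have hc : c ≠ 0 := by tauto
      refine ⟨c' / c, ?_, ?_, ?_⟩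
      · field_simp
        linear_combination -m2
      · field_simp
        linear_combination -m1
      · field_simp
    · refine ⟨b' / b, ?_, ?_, ?_⟩
      · field_simp
        linear_combination -m3
      · field_simp
      · field_simp
        linear_combination m1
  · refine ⟨a' / a, ?_, ?_, ?_⟩
    · field_simp
    · field_simp
      linear_combination m3
    · field_simp
      linear_combination m2

set_option maxHeartbeats 1000000 in
/-- Let `P = [a:b:c]` be a point of the Fermat sextic `B_F : x⁶+y⁶+z⁶ = 0` in
characteristic 5 that is *not* `F₂₅`-rational, i.e. `[a²⁵:b²⁵:c²⁵] ≠ [a:b:c]`.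
The tangent line of `B_F` at `P` is `a⁵x+b⁵y+c⁵z = 0`; it passes through the
point `P' = [a²⁵:b²⁵:c²⁵]`, and parametrizing it as `sP + tP'` the restriction
of the sextic equals `u·s·t⁵` with `u ≠ 0`: the tangent line meets `B_F` at `P`
with intersection multiplicity `5` and transversely at the single further point
`[a²⁵:b²⁵:c²⁵]`. -/
theorem stmt_7 (a b c : Kbar)
    (hP0 : ¬(a = 0 ∧ b = 0 ∧ c = 0))
    (hPcurve : a ^ 6 + b ^ 6 + c ^ 6 = 0)
    (hPirr : ¬∃ s : Kbar, a ^ 25 = s * a ∧ b ^ 25 = s * b ∧ c ^ 25 = s * c) :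
    (a ^ 5 * a ^ 25 + b ^ 5 * b ^ 25 + c ^ 5 * c ^ 25 = 0) ∧
    ∃ u : Kbar, u ≠ 0 ∧ ∀ s t : Kbar,
      (s * a + t * a ^ 25) ^ 6 + (s * b + t * b ^ 25) ^ 6 +
          (s * c + t * c ^ 25) ^ 6
        = u * s * t ^ 5 := by
  have h30 : a ^ 30 + b ^ 30 + c ^ 30 = 0 := by
    have h : (a ^ 6 + b ^ 6 + c ^ 6) ^ 5 = 0 := by rw [hPcurve]; ring
    rw [add_pow_char _ _ 5, add_pow_char _ _ 5] at h
    linear_combination h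
  have h150 : a ^ 150 + b ^ 150 + c ^ 150 = 0 := by
    have h : (a ^ 30 + b ^ 30 + c ^ 30) ^ 5 = 0 := by rw [h30]; ring
    rw [add_pow_char _ _ 5, add_pow_char _ _ 5] at h
    linear_combination h
  refine ⟨by linear_combination h30, a ^ 126 + b ^ 126 + c ^ 126, ?_, ?_⟩
  · -- u ≠ 0
    intro hu
    apply hPirr
    have h1 : a * a ^ 5 + b * b ^ 5 + c * c ^ 5 = 0 := by linear_combination hPcurve
    have h2 : a ^ 5 * a ^ 25 + b ^ 5 * b ^ 25 + c ^ 5 * c ^ 25 = 0 := by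
      linear_combination h30
    have h3 : a * a ^ 125 + b * b ^ 125 + c * c ^ 125 = 0 := by linear_combination hu
    have h4 : a ^ 25 * a ^ 125 + b ^ 25 * b ^ 125 + c ^ 25 * c ^ 125 = 0 := by
      have h : (a ^ 30 + b ^ 30 + c ^ 30) ^ 5 = 0 := by rw [h30]; ring
      rw [add_pow_char _ _ 5, add_pow_char _ _ 5] at h
      linear_combination h
    by_cases hw : b ^ 5 * c ^ 125 - c ^ 5 * b ^ 125 = 0 ∧
        c ^ 5 * a ^ 125 - a ^ 5 * c ^ 125 = 0 ∧
        a ^ 5 * b ^ 125 - b ^ 5 * a ^ 125 = 0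
    · obtain ⟨m1, m2, m3⟩ := hw
      have n1 : b * c ^ 25 = c * b ^ 25 := pow5_inj _ _ (by linear_combination m1)
      have n2 : c * a ^ 25 = a * c ^ 25 := pow5_inj _ _ (by linear_combination m2)
      have n3 : a * b ^ 25 = b * a ^ 25 := pow5_inj _ _ (by linear_combination m3)
      exact get_s a b c (a ^ 25) (b ^ 25) (c ^ 25) hP0
        (by linear_combination n3) (by linear_combination -n2) (by linear_combination n1)
    · have hp1 : b * (a ^ 5 * b ^ 125 - b ^ 5 * a ^ 125)
          = c * (c ^ 5 * a ^ 125 - a ^ 5 * c ^ 125) := by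
        linear_combination a ^ 5 * h3 - a ^ 125 * h1
      have hp2 : c * (b ^ 5 * c ^ 125 - c ^ 5 * b ^ 125)
          = a * (a ^ 5 * b ^ 125 - b ^ 5 * a ^ 125) := by
        linear_combination b ^ 5 * h3 - b ^ 125 * h1
      have hp3 : a * (c ^ 5 * a ^ 125 - a ^ 5 * c ^ 125)
          = b * (b ^ 5 * c ^ 125 - c ^ 5 * b ^ 125) := by
        linear_combination c ^ 5 * h3 - c ^ 125 * h1
      have hq1 : b ^ 25 * (a ^ 5 * b ^ 125 - b ^ 5 * a ^ 125)
          = c ^ 25 * (c ^ 5 * a ^ 125 - a ^ 5 * c ^ 125) := by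
        linear_combination a ^ 5 * h4 - a ^ 125 * h2
      have hq2 : c ^ 25 * (b ^ 5 * c ^ 125 - c ^ 5 * b ^ 125)
          = a ^ 25 * (a ^ 5 * b ^ 125 - b ^ 5 * a ^ 125) := by
        linear_combination b ^ 5 * h4 - b ^ 125 * h2
      have hq3 : a ^ 25 * (c ^ 5 * a ^ 125 - a ^ 5 * c ^ 125)
          = b ^ 25 * (b ^ 5 * c ^ 125 - c ^ 5 * b ^ 125) := by
        linear_combination c ^ 5 * h4 - c ^ 125 * h2
      obtain ⟨g1, g2, g3⟩ := cross_helper a b c (a ^ 25) (b ^ 25) (c ^ 25)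
        (b ^ 5 * c ^ 125 - c ^ 5 * b ^ 125) (c ^ 5 * a ^ 125 - a ^ 5 * c ^ 125)
        (a ^ 5 * b ^ 125 - b ^ 5 * a ^ 125) hw hp1 hp2 hp3 hq1 hq2 hq3
      exact get_s a b c (a ^ 25) (b ^ 25) (c ^ 25) hP0
        (by linear_combination g1) (by linear_combination g2) (by linear_combination g3)
  · intro s t
    have hx : ∀ x : Kbar, (s * x + t * x ^ 25) ^ 6
        = (s * x + t * x ^ 25) * (s ^ 5 * x ^ 5 + t ^ 5 * x ^ 125) := by
      intro x
      have : (s * x + t * x ^ 25) ^ 6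
          = (s * x + t * x ^ 25) ^ 5 * (s * x + t * x ^ 25) := by ring
      rw [this, add_pow_char _ _ 5]
      ring
    rw [hx a, hx b, hx c]
    linear_combination s ^ 6 * hPcurve + s ^ 5 * t * h30 + t ^ 6 * h150

end
end

section
/- Let QT = [Q, L, c] be a positive quadratic triple of n variables, written in block form with Q = [[Q', p'],[p'ᵗ, r']] and L = [[L'],[m']] where Q' has size n−1. Define pr(QT) := [Q' − (1/r')·p'p'ᵗ, L' − (m'/r')·p', c − m'²/r']. Then pr(QT) is a positive quadratic triple of n−1 variables, and for every t ∈ R the image of {x ∈ Rⁿ : q_QT(x) ≤ t} under the projection (x₁,…,xₙ) ↦ (x₁,…,xₙ₋₁) equals {y ∈ Rⁿ⁻¹ : q_{pr(QT)}(y) ≤ t}. -/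
/-!
Completing the square in the last variable: for `x = (y, s)`,
`q_QT(y, s) = q_pr(QT)(y) + r' (s + (⟨y, p'⟩ + m') / r')²`.
As a diagonal entry of a positive definite matrix, `r' > 0`, so the minimum of `q_QT(y, ·)` is
`q_pr(QT)(y)`, attained at `s = -(⟨y, p'⟩ + m') / r'`. This describes the projected sublevel
sets, and for `L = 0`, `c = 0` it shows that `Q' - p'p'ᵗ/r'` is again positive definite.
-/

noncomputable section

open Matrix

/-- The real inhomogeneous quadratic function `q(x) = x Q xᵗ + 2 x L + c`
associated with a rational quadratic triple `[Q, L, c]`. -/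
def quadFun {n : ℕ} (Q : Matrix (Fin n) (Fin n) ℚ) (L : Fin n → ℚ) (c : ℚ)
    (x : Fin n → ℝ) : ℝ :=
  x ⬝ᵥ (Q.map (fun a => (a : ℝ))).mulVec x + 2 * (x ⬝ᵥ fun i => (L i : ℝ)) + c

section QuadTriple

variable {α : Type*} {n : ℕ}

def quadForm [Semiring α] (A : Matrix (Fin n) (Fin n) α) (l : Fin n → α) (c : α)
    (x : Fin n → α) : α :=
  x ⬝ᵥ A *ᵥ x + 2 * (x ⬝ᵥ l) + c

def lastCol (A : Matrix (Fin (n + 1)) (Fin (n + 1)) α) : Fin n → α :=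
  fun i => A i.castSucc (Fin.last n)

def prMatrix [Field α] (A : Matrix (Fin (n + 1)) (Fin (n + 1)) α) : Matrix (Fin n) (Fin n) α :=
  of fun i j => A i.castSucc j.castSucc - lastCol A i * lastCol A j / A (Fin.last n) (Fin.last n)

def prLinear [Field α] (A : Matrix (Fin (n + 1)) (Fin (n + 1)) α) (l : Fin (n + 1) → α) :
    Fin n → α :=
  fun i => l i.castSucc - (l (Fin.last n) / A (Fin.last n) (Fin.last n)) * lastCol A i

def prConst [Field α] (A : Matrix (Fin (n + 1)) (Fin (n + 1)) α) (l : Fin (n + 1) → α) (c : α) :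
    α :=
  c - l (Fin.last n) ^ 2 / A (Fin.last n) (Fin.last n)

section CommRing

variable [CommRing α]

theorem snoc_dotProduct (y : Fin n → α) (s : α) (l : Fin (n + 1) → α) :
    Fin.snoc y s ⬝ᵥ l = y ⬝ᵥ Fin.init l + s * l (Fin.last n) := by
  simp [dotProduct, Fin.sum_univ_castSucc, Fin.init]

theorem mulVec_snoc {m : Type*} [Fintype m] (A : Matrix m (Fin (n + 1)) α) (y : Fin n → α)
    (s : α) :
    A *ᵥ Fin.snoc y s = A.submatrix id Fin.castSucc *ᵥ y + s • fun i => A i (Fin.last n) := by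
  ext i
  simp [mulVec, dotProduct, Fin.sum_univ_castSucc, mul_comm]

theorem snoc_dotProduct_mulVec_snoc {A : Matrix (Fin (n + 1)) (Fin (n + 1)) α} (hA : A.IsSymm)
    (y : Fin n → α) (s : α) :
    Fin.snoc y s ⬝ᵥ A *ᵥ Fin.snoc y s =
      y ⬝ᵥ A.submatrix Fin.castSucc Fin.castSucc *ᵥ y + 2 * s * (y ⬝ᵥ lastCol A)
        + A (Fin.last n) (Fin.last n) * s ^ 2 := by
  have hinit : Fin.init (A.submatrix id Fin.castSucc *ᵥ y + s • fun i => A i (Fin.last n)) =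
      A.submatrix Fin.castSucc Fin.castSucc *ᵥ y + s • lastCol A := rfl
  have hlast : (A.submatrix id Fin.castSucc *ᵥ y) (Fin.last n) = lastCol A ⬝ᵥ y :=
    congrArg (· ⬝ᵥ y) (funext fun j => hA.apply j.castSucc (Fin.last n))
  rw [snoc_dotProduct, mulVec_snoc, hinit, Pi.add_apply, Pi.smul_apply, hlast, dotProduct_add,
    dotProduct_smul, smul_eq_mul, smul_eq_mul, dotProduct_comm (lastCol A)]
  ring

end CommRing

section Field

variable [Field α]

theorem prMatrix_eq_sub_smul_vecMulVec (A : Matrix (Fin (n + 1)) (Fin (n + 1)) α) :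
    prMatrix A = A.submatrix Fin.castSucc Fin.castSucc
      - (A (Fin.last n) (Fin.last n))⁻¹ • vecMulVec (lastCol A) (lastCol A) := by
  ext i j
  simp only [prMatrix, of_apply, Matrix.sub_apply, submatrix_apply, Matrix.smul_apply,
    vecMulVec_apply, smul_eq_mul]
  ring

theorem dotProduct_prMatrix_mulVec (A : Matrix (Fin (n + 1)) (Fin (n + 1)) α) (y : Fin n → α) :
    y ⬝ᵥ prMatrix A *ᵥ y = y ⬝ᵥ A.submatrix Fin.castSucc Fin.castSucc *ᵥ y
      - (y ⬝ᵥ lastCol A) ^ 2 / A (Fin.last n) (Fin.last n) := by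
  rw [prMatrix_eq_sub_smul_vecMulVec, sub_mulVec, dotProduct_sub, smul_mulVec, dotProduct_smul,
    dotProduct_mulVec y (vecMulVec _ _), vecMul_vecMulVec, smul_dotProduct, dotProduct_comm _ y,
    smul_eq_mul, smul_eq_mul]
  ring

theorem dotProduct_prLinear (A : Matrix (Fin (n + 1)) (Fin (n + 1)) α) (l : Fin (n + 1) → α)
    (y : Fin n → α) :
    y ⬝ᵥ prLinear A l = y ⬝ᵥ Fin.init l
      - l (Fin.last n) / A (Fin.last n) (Fin.last n) * (y ⬝ᵥ lastCol A) := by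
  have : prLinear A l = Fin.init l - (l (Fin.last n) / A (Fin.last n) (Fin.last n)) • lastCol A :=
    rfl
  rw [this, dotProduct_sub, dotProduct_smul, smul_eq_mul]

theorem quadForm_snoc {A : Matrix (Fin (n + 1)) (Fin (n + 1)) α} (hA : A.IsSymm)
    (hr : A (Fin.last n) (Fin.last n) ≠ 0) (l : Fin (n + 1) → α) (c : α) (y : Fin n → α)
    (s : α) :
    quadForm A l c (Fin.snoc y s) = quadForm (prMatrix A) (prLinear A l) (prConst A l c) y
      + A (Fin.last n) (Fin.last n)
        * (s + (y ⬝ᵥ lastCol A + l (Fin.last n)) / A (Fin.last n) (Fin.last n)) ^ 2 := by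
  rw [quadForm, quadForm, snoc_dotProduct_mulVec_snoc hA, snoc_dotProduct,
    dotProduct_prMatrix_mulVec, dotProduct_prLinear, prConst]
  field_simp
  ring

theorem isSymm_prMatrix {A : Matrix (Fin (n + 1)) (Fin (n + 1)) α} (hA : A.IsSymm) :
    (prMatrix A).IsSymm :=
  IsSymm.ext fun i j => by
    simp only [prMatrix, of_apply]
    rw [hA.apply, mul_comm (lastCol A j)]

theorem prMatrix_map {β : Type*} [Field β] (f : α →+* β)
    (A : Matrix (Fin (n + 1)) (Fin (n + 1)) α) : (prMatrix A).map f = prMatrix (A.map f) := by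
  ext i j
  simp [prMatrix, lastCol]

theorem prLinear_map {β : Type*} [Field β] (f : α →+* β)
    (A : Matrix (Fin (n + 1)) (Fin (n + 1)) α) (l : Fin (n + 1) → α) :
    (fun i => f (prLinear A l i)) = prLinear (A.map f) fun i => f (l i) := by
  ext i
  simp [prLinear, lastCol]

theorem prConst_map {β : Type*} [Field β] (f : α →+* β)
    (A : Matrix (Fin (n + 1)) (Fin (n + 1)) α) (l : Fin (n + 1) → α) (c : α) :
    f (prConst A l c) = prConst (A.map f) (fun i => f (l i)) (f c) := by
  simp [prConst]

end Field

theorem diag_pos_of_forall_dotProduct_mulVec_pos [Semiring α] [PartialOrder α] [Nontrivial α]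
    {m : Type*} [Fintype m] [DecidableEq m] {A : Matrix m m α}
    (hpos : ∀ v : m → α, v ≠ 0 → 0 < v ⬝ᵥ A *ᵥ v) (i : m) : 0 < A i i := by
  simpa using hpos (Pi.single i 1) (Pi.single_ne_zero_iff.mpr one_ne_zero)

theorem dotProduct_prMatrix_mulVec_pos [Field α] [PartialOrder α]
    {A : Matrix (Fin (n + 1)) (Fin (n + 1)) α} (hA : A.IsSymm)
    (hpos : ∀ v : Fin (n + 1) → α, v ≠ 0 → 0 < v ⬝ᵥ A *ᵥ v) (y : Fin n → α) (hy : y ≠ 0) :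
    0 < y ⬝ᵥ prMatrix A *ᵥ y := by
  have hr := diag_pos_of_forall_dotProduct_mulVec_pos hpos (Fin.last n)
  set s := -(y ⬝ᵥ lastCol A) / A (Fin.last n) (Fin.last n) with hs
  have hx : (Fin.snoc y s : Fin (n + 1) → α) ≠ 0 :=
    fun h => hy (by simpa using congrArg Fin.init h : y = Fin.init (0 : Fin (n + 1) → α))
  have hq := hpos _ hx
  rw [snoc_dotProduct_mulVec_snoc hA] at hq
  rw [dotProduct_prMatrix_mulVec]
  convert hq using 1
  rw [hs]
  field_simp
  ring

theorem image_init_quadForm_sublevel [Field α] [LinearOrder α] [IsStrictOrderedRing α]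
    {A : Matrix (Fin (n + 1)) (Fin (n + 1)) α} (hA : A.IsSymm)
    (hr : 0 < A (Fin.last n) (Fin.last n)) (l : Fin (n + 1) → α) (c t : α) :
    Fin.init '' {x | quadForm A l c x ≤ t}
      = {y | quadForm (prMatrix A) (prLinear A l) (prConst A l c) y ≤ t} := by
  ext y
  constructor
  · rintro ⟨x, hx, rfl⟩
    rw [Set.mem_ofPred_eq, ← Fin.snoc_init_self (α := fun _ => α) x,
      quadForm_snoc hA hr.ne'] at hx
    exact le_trans (le_add_of_nonneg_right (by positivity)) hx
  · intro hy
    refine ⟨Fin.snoc y (-(y ⬝ᵥ lastCol A + l (Fin.last n)) / A (Fin.last n) (Fin.last n)), ?_,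
      Fin.init_snoc _ _⟩
    rw [Set.mem_ofPred_eq, quadForm_snoc hA hr.ne', neg_div, neg_add_cancel]
    simpa using hy

end QuadTriple

theorem quadFun_eq_quadForm {n : ℕ} (Q : Matrix (Fin n) (Fin n) ℚ) (L : Fin n → ℚ) (c : ℚ) :
    quadFun Q L c =
      quadForm (Q.map (Rat.castHom ℝ)) (fun i => Rat.castHom ℝ (L i)) (Rat.castHom ℝ c) :=
  rfl

/-- Projection of a positive quadratic triple: with the block decomposition
`Q = [[Q', p'],[p'ᵗ, r']]`, `L = [[L'],[m']]` (last row/column split off),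
`pr(QT) = [Q' − p'p'ᵗ/r', L' − (m'/r')p', c − m'²/r']` is again a positive
quadratic triple, and for every `t ∈ ℝ` the image of the sublevel set
`{x : q_QT(x) ≤ t}` under the projection forgetting the last coordinate is
exactly the sublevel set `{y : q_pr(QT)(y) ≤ t}`. -/
theorem stmt_10 {n : ℕ} (Q : Matrix (Fin (n+1)) (Fin (n+1)) ℚ)
    (L : Fin (n+1) → ℚ) (c : ℚ)
    (hsymm : Q.IsSymm)
    (hpos : ∀ v : Fin (n+1) → ℚ, v ≠ 0 → 0 < v ⬝ᵥ Q.mulVec v)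
    (p' : Fin n → ℚ) (hp' : p' = fun i => Q i.castSucc (Fin.last n))
    (r' : ℚ) (hr' : r' = Q (Fin.last n) (Fin.last n))
    (m' : ℚ) (hm' : m' = L (Fin.last n))
    (prQ : Matrix (Fin n) (Fin n) ℚ)
    (hprQ : prQ = Matrix.of fun i j => Q i.castSucc j.castSucc - p' i * p' j / r')
    (prL : Fin n → ℚ) (hprL : prL = fun i => L i.castSucc - (m' / r') * p' i)
    (prc : ℚ) (hprc : prc = c - m' ^ 2 / r') :
    prQ.IsSymm ∧
    (∀ v : Fin n → ℚ, v ≠ 0 → 0 < v ⬝ᵥ prQ.mulVec v) ∧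
    (∀ t : ℝ,
      (fun x : Fin (n+1) → ℝ => x ∘ Fin.castSucc) '' {x | quadFun Q L c x ≤ t}
        = {y | quadFun prQ prL prc y ≤ t}) := by
  obtain rfl : prQ = prMatrix Q := by subst_vars; rfl
  obtain rfl : prL = prLinear Q L := by subst_vars; rfl
  obtain rfl : prc = prConst Q L c := by subst_vars; rfl
  refine ⟨isSymm_prMatrix hsymm, dotProduct_prMatrix_mulVec_pos hsymm hpos, fun t => ?_⟩
  have hr : 0 < Q.map (Rat.castHom ℝ) (Fin.last n) (Fin.last n) := by
    simpa using diag_pos_of_forall_dotProduct_mulVec_pos hpos (Fin.last n)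
  rw [quadFun_eq_quadForm, quadFun_eq_quadForm, prMatrix_map, prLinear_map, prConst_map]
  exact image_init_quadForm_sublevel (hsymm.map _) hr _ _ t

end
end

section
/- Let N be a hyperbolic lattice, h, v ∈ N with ⟨h,h⟩>0, ⟨v,v⟩>0, ⟨h,v⟩>0, and let d ∈ Z. Let r ∈ N satisfy ⟨r,h⟩ > 0, ⟨r,v⟩ < 0 and ⟨r,r⟩ = d. Put t_r := −⟨r,h⟩/⟨r,v⟩ > 0 and let r' be the orthogonal projection of r to h^⊥ in N⊗R. Then with f_x(y) := ⟨y,y⟩ + (⟨y,x⟩²/⟨h,x⟩²)⟨h,h⟩ for y ∈ h^⊥, one has ⟨r, h+t_r v⟩ = 0, d = f_{h+t_r v}(r') ≤ ⟨r',r'⟩ + (⟨r',v⟩²/⟨h,v⟩²)·⟨h,h⟩, and moreover r = ρ·h + r' with ρ = ⟨r,h⟩/⟨h,h⟩ = √((d − ⟨r',r'⟩)/⟨h,h⟩). -/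
/-!
The vector `h + t_r v` is chosen so that `r ⟂ h + t_r v`. Writing `r = ρ h + r'` with `r' ⟂ h`,
any `x ⟂ r` has `⟨r', x⟩ = -ρ ⟨h, x⟩`, so `f_x(r') = ⟨r', r'⟩ + ρ² ⟨h, h⟩ = ⟨r, r⟩ = d`. For `x = v`
instead, the signs `ρ > 0`, `⟨h,v⟩ > 0`, `⟨r,v⟩ < 0` give `|⟨r', v⟩| = |⟨r,v⟩| + ρ ⟨h,v⟩ ≥ ρ ⟨h,v⟩`,
hence `f_v(r') ≥ d`.
-/

section Projection

variable {K V : Type*} [Field K] [AddCommGroup V] [Module K V] (B : V →ₗ[K] V →ₗ[K] K)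

theorem apply_add_div_smul_eq_zero {r h v : V} (hrv : B r v ≠ 0) :
    B r (h + (-(B r h) / B r v) • v) = 0 := by
  simp only [map_add, map_smul, smul_eq_mul]
  field_simp
  ring

theorem apply_sub_smul_left (r h x : V) (ρ : K) :
    B (r - ρ • h) x = B r x - ρ * B h x := by
  simp only [map_sub, map_smul, LinearMap.sub_apply, LinearMap.smul_apply, smul_eq_mul]

theorem apply_sub_div_smul_self (hB : ∀ x y : V, B x y = B y x) {h : V} (hh : B h h ≠ 0)
    (r : V) :
    B (r - (B r h / B h h) • h) (r - (B r h / B h h) • h) =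
      B r r - (B r h / B h h) ^ 2 * B h h := by
  simp only [map_sub, map_smul, LinearMap.sub_apply, LinearMap.smul_apply, smul_eq_mul,
    hB h r]
  field_simp
  ring

theorem apply_sub_div_smul_self_add_sq_div_sq_mul (hB : ∀ x y : V, B x y = B y x) {h x : V}
    (hh : B h h ≠ 0) (hhx : B h x ≠ 0) {r : V} (hrx : B r x = 0) :
    B (r - (B r h / B h h) • h) (r - (B r h / B h h) • h) +
        (B (r - (B r h / B h h) • h) x) ^ 2 / (B h x) ^ 2 * B h h = B r r := by
  rw [apply_sub_div_smul_self B hB hh, apply_sub_smul_left, hrx]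
  field_simp
  ring

end Projection

section Ordered

variable {K V : Type*} [Field K] [LinearOrder K] [IsStrictOrderedRing K]
  [AddCommGroup V] [Module K V] (B : V →ₗ[K] V →ₗ[K] K)

theorem le_apply_sub_div_smul_self_add_sq_div_sq_mul (hB : ∀ x y : V, B x y = B y x)
    {h v r : V} (hh : 0 < B h h) (hhv : 0 < B h v) (hrh : 0 ≤ B r h) (hrv : B r v ≤ 0) :
    B r r ≤ B (r - (B r h / B h h) • h) (r - (B r h / B h h) • h) +
        (B (r - (B r h / B h h) • h) v) ^ 2 / (B h v) ^ 2 * B h h := by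
  rw [apply_sub_div_smul_self B hB hh.ne', apply_sub_smul_left]
  set ρ := B r h / B h h
  have hρ : 0 ≤ ρ := div_nonneg hrh hh.le
  have hsq : ρ ^ 2 * (B h v) ^ 2 ≤ (B r v - ρ * B h v) ^ 2 := by
    nlinarith [mul_nonneg (neg_nonneg.mpr hrv) (mul_nonneg hρ hhv.le), sq_nonneg (B r v)]
  have hdiv : ρ ^ 2 ≤ (B r v - ρ * B h v) ^ 2 / (B h v) ^ 2 := by
    rw [le_div_iff₀ (by positivity)]
    exact hsq
  linarith [mul_le_mul_of_nonneg_right hdiv hh.le]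

end Ordered

theorem div_eq_sqrt_sub_apply_sub_div_smul_self {V : Type*} [AddCommGroup V] [Module ℝ V]
    (B : V →ₗ[ℝ] V →ₗ[ℝ] ℝ) (hB : ∀ x y : V, B x y = B y x) {h r : V} (hh : 0 < B h h)
    (hrh : 0 ≤ B r h) :
    B r h / B h h =
      Real.sqrt ((B r r - B (r - (B r h / B h h) • h) (r - (B r h / B h h) • h)) / B h h) := by
  rw [apply_sub_div_smul_self B hB hh.ne', sub_sub_cancel, mul_div_cancel_right₀ _ hh.ne',
    Real.sqrt_sq (div_nonneg hrh hh.le)]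

theorem stmt_14_general {V : Type*} [AddCommGroup V] [Module ℝ V]
    (B : V →ₗ[ℝ] V →ₗ[ℝ] ℝ) (hBsymm : ∀ x y : V, B x y = B y x)
    (h v : V) (hh : 0 < B h h) (hhv : 0 < B h v)
    (d : ℤ) (r : V) (hrh : 0 < B r h) (hrv : B r v < 0) (hrr : B r r = (d : ℝ))
    (tr : ℝ) (htr : tr = -(B r h) / B r v)
    (r' : V) (hr' : r' = r - (B r h / B h h) • h) :
    0 < tr ∧
    B r (h + tr • v) = 0 ∧
    (d : ℝ) = B r' r' + ((B r' (h + tr • v)) ^ 2 / (B h (h + tr • v)) ^ 2) * B h h ∧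
    (d : ℝ) ≤ B r' r' + ((B r' v) ^ 2 / (B h v) ^ 2) * B h h ∧
    r = (B r h / B h h) • h + r' ∧
    B r h / B h h = Real.sqrt (((d : ℝ) - B r' r') / B h h) := by
  have htr_pos : 0 < tr := htr ▸ div_pos_of_neg_of_neg (neg_neg_of_pos hrh) hrv
  have hr_perp : B r (h + tr • v) = 0 := htr ▸ apply_add_div_smul_eq_zero B hrv.ne
  have hh_pos : 0 < B h (h + tr • v) := by
    simp only [map_add, map_smul, smul_eq_mul]
    positivity
  subst hr'
  rw [← hrr]
  exact ⟨htr_pos, hr_perp,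
    (apply_sub_div_smul_self_add_sq_div_sq_mul B hBsymm hh.ne' hh_pos.ne' hr_perp).symm,
    le_apply_sub_div_smul_self_add_sq_div_sq_mul B hBsymm hh hhv hrh.le hrv.le,
    by abel, div_eq_sqrt_sub_apply_sub_div_smul_self B hBsymm hh hrh.le⟩

/-- Let `V = N ⊗ ℝ` for a hyperbolic lattice `N` (signature `(1, n−1)`), let
`h, v` satisfy `⟨h,h⟩ > 0`, `⟨v,v⟩ > 0`, `⟨h,v⟩ > 0`, let `d ∈ ℤ`, and let `r`
satisfy `⟨r,h⟩ > 0`, `⟨r,v⟩ < 0`, `⟨r,r⟩ = d`.  Put `t_r = −⟨r,h⟩/⟨r,v⟩` and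
let `r'` be the orthogonal projection of `r` to `h^⊥`.  Then `t_r > 0`,
`⟨r, h + t_r v⟩ = 0`, `d = f_{h+t_r v}(r') ≤ ⟨r',r'⟩ + (⟨r',v⟩²/⟨h,v⟩²)⟨h,h⟩`
(where `f_x(y) = ⟨y,y⟩ + (⟨y,x⟩²/⟨h,x⟩²)⟨h,h⟩`), and `r = ρh + r'` with
`ρ = ⟨r,h⟩/⟨h,h⟩ = √((d − ⟨r',r'⟩)/⟨h,h⟩)`. -/
theorem stmt_14 {n : ℕ} {V : Type*} [AddCommGroup V] [Module ℝ V]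
    (B : V →ₗ[ℝ] V →ₗ[ℝ] ℝ) (hBsymm : ∀ x y : V, B x y = B y x)
    (b : Module.Basis (Fin (n+1)) ℝ V)
    (horth : ∀ i j : Fin (n+1), i ≠ j → B (b i) (b j) = 0)
    (hsig : ∀ i : Fin (n+1), (i = 0 → 0 < B (b i) (b i)) ∧
      (i ≠ 0 → B (b i) (b i) < 0))
    (h v : V) (hh : 0 < B h h) (hv : 0 < B v v) (hhv : 0 < B h v)
    (d : ℤ) (r : V) (hrh : 0 < B r h) (hrv : B r v < 0) (hrr : B r r = (d : ℝ))
    (tr : ℝ) (htr : tr = -(B r h) / B r v)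
    (r' : V) (hr' : r' = r - (B r h / B h h) • h) :
    0 < tr ∧
    B r (h + tr • v) = 0 ∧
    (d : ℝ) = B r' r' + ((B r' (h + tr • v)) ^ 2 / (B h (h + tr • v)) ^ 2) * B h h ∧
    (d : ℝ) ≤ B r' r' + ((B r' v) ^ 2 / (B h v) ^ 2) * B h h ∧
    r = (B r h / B h h) • h + r' ∧
    B r h / B h h = Real.sqrt (((d : ℝ) - B r' r') / B h h) :=
  stmt_14_general B hBsymm h v hh hhv d r hrh hrv hrr tr htr r' hr'
end
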